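/- arXiv:2509.20472 — 8 statements merged into one kernel-verified Lean document; each statement's English description precedes it below -/
import Mathlib

section
/- The map d on pairs of functions from the naturals to the reals, defined by d(f,g) = limsup_{n→∞} of (exp(log|f(n) − g(n)| / log n) when f(n) ≠ g(n), and 0 when f(n) = g(n)), is a pseudometric with values in [0,∞]: for all f, g, h : ℕ → ℝ one has d(f,f) = 0, d(f,g) = d(g,f), and d(f,g) ≤ d(f,h) + d(g,h). -/
open Filter

/-- The pseudometric of asymptotic exponent: `d(f,g)` is the `limsup` as `n → ∞` of
`exp (log |f n - g n| / log n)` when `f n ≠ g n`, and `0` when `f n = g n`,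
taking values in the extended nonnegative reals. -/
noncomputable def pd (f g : ℕ → ℝ) : ENNReal :=
  Filter.limsup
    (fun n : ℕ =>
      if f n = g n then 0
      else ENNReal.ofReal (Real.exp (Real.log |f n - g n| / Real.log n)))
    Filter.atTop

/-!
For `n ≥ 2` the `n`-th term of `pd f g` is `|f n - g n| ^ p` with `p = 1 / log n`, and for `n ≥ 3`
this exponent lies in `(0, 1]`. For such `p` the map `t ↦ t ^ p` is subadditive, so
`|a - b| ^ p` satisfies the triangle inequality (it is the `p`-snowflake of the usual distance).
The triangle inequality thus holds termwise for all large `n`, and passes to the `limsup`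
because the `limsup` is subadditive on `ℝ≥0∞`.
-/

open scoped ENNReal

-- `ENNReal.limsup_add_le` needs `CountableInterFilter`, which excludes `atTop`.
theorem ENNReal.limsup_add_le' {ι : Type*} (l : Filter ι) (u v : ι → ℝ≥0∞) :
    limsup (u + v) l ≤ limsup u l + limsup v l := by
  refine ENNReal.le_of_forall_pos_le_add fun ε hε hfin ↦ ?_
  obtain ⟨hu, hv⟩ := ENNReal.add_ne_top.1 hfin.ne
  have hε₂ : (ε / 2 : ℝ≥0∞) ≠ 0 := by simp [hε.ne']
  refine limsup_le_of_le (by isBoundedDefault) ?_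
  filter_upwards [eventually_lt_of_limsup_lt (ENNReal.lt_add_right hu hε₂),
    eventually_lt_of_limsup_lt (ENNReal.lt_add_right hv hε₂)] with i hui hvi
  calc u i + v i ≤ (limsup u l + ε / 2) + (limsup v l + ε / 2) := add_le_add hui.le hvi.le
    _ = limsup u l + limsup v l + ε := by rw [add_add_add_comm, ENNReal.add_halves]

lemma edist_rpow_triangle {X : Type*} [PseudoEMetricSpace X] {p : ℝ} (hp₀ : 0 ≤ p)
    (hp₁ : p ≤ 1) (x y z : X) : edist x y ^ p ≤ edist x z ^ p + edist y z ^ p := by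
  grw [edist_triangle_right x y z, ENNReal.rpow_add_le_add_rpow _ _ hp₀ hp₁]

lemma limsup_edist_rpow_triangle {ι X : Type*} [PseudoEMetricSpace X] {l : Filter ι}
    {p : ι → ℝ} (hp : ∀ᶠ i in l, p i ∈ Set.Icc 0 1) (f g h : ι → X) :
    limsup (fun i ↦ edist (f i) (g i) ^ p i) l ≤
      limsup (fun i ↦ edist (f i) (h i) ^ p i) l + limsup (fun i ↦ edist (g i) (h i) ^ p i) l :=
  (limsup_le_limsup (hp.mono fun _ hi ↦ edist_rpow_triangle hi.1 hi.2 _ _ _)).trans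
    (ENNReal.limsup_add_le' _ _ _)

lemma eventually_inv_log_natCast_mem_Icc :
    ∀ᶠ n : ℕ in atTop, (Real.log n)⁻¹ ∈ Set.Icc (0 : ℝ) 1 := by
  filter_upwards [eventually_ge_atTop 3] with n hn
  have hn' : (3 : ℝ) ≤ n := by exact_mod_cast hn
  have h_one_le_log : 1 ≤ Real.log n :=
    (Real.le_log_iff_exp_le (by linarith)).2 (by linarith [Real.exp_one_lt_d9])
  exact ⟨inv_nonneg.2 (Real.log_natCast_nonneg n), inv_le_one_of_one_le₀ h_one_le_log⟩

lemma ofReal_exp_log_abs_sub_div_eq_edist_rpow {x y : ℝ} (hxy : x ≠ y) (t : ℝ) :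
    ENNReal.ofReal (Real.exp (Real.log |x - y| / t)) = edist x y ^ t⁻¹ := by
  have hpos : 0 < |x - y| := abs_pos.2 (sub_ne_zero.2 hxy)
  rw [edist_dist, Real.dist_eq, ENNReal.ofReal_rpow_of_pos hpos, Real.rpow_def_of_pos hpos,
    div_eq_mul_inv]

lemma pd_eq_limsup_edist_rpow (f g : ℕ → ℝ) :
    pd f g = limsup (fun n : ℕ ↦ edist (f n) (g n) ^ (Real.log n)⁻¹) atTop := by
  refine limsup_congr ?_
  filter_upwards [eventually_gt_atTop 1] with n hn
  have hlog : 0 < (Real.log n)⁻¹ := inv_pos.2 (Real.log_pos (by exact_mod_cast hn))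
  split_ifs with hfg
  · simp [hfg, hlog]
  · exact ofReal_exp_log_abs_sub_div_eq_edist_rpow hfg _

/-- `pd` is a pseudometric: reflexivity, symmetry and the triangle inequality. -/
theorem pd_isPseudometric (f g h : ℕ → ℝ) :
    pd f f = 0 ∧ pd f g = pd g f ∧ pd f g ≤ pd f h + pd g h := by
  refine ⟨by simp [pd], ?_, ?_⟩
  · simp_rw [pd_eq_limsup_edist_rpow, edist_comm]
  · simpa only [pd_eq_limsup_edist_rpow] using
      limsup_edist_rpow_triangle eventually_inv_log_natCast_mem_Icc f g h
end

section
/- For a function f : ℕ → ℝ, the following are equivalent: (i) for every k ∈ ℕ there exists n₀ such that |f(n)| ≤ n^{−k} for all n ≥ n₀ (f is negligible); (ii) d(f, 0) = 0, where 0 denotes the zero function. -/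
open Filter

/-- `f` is negligible if it is eventually bounded by every inverse polynomial. -/
def Negligible (f : ℕ → ℝ) : Prop :=
  ∀ k : ℕ, ∃ n₀ : ℕ, ∀ n ≥ n₀, |f n| ≤ ((n : ℝ) ^ k)⁻¹

/-! Since `log n > 0` for `n ≥ 2`, the `n`-th term of `d(f, 0)` is at most `e^{-k}` exactly when
`|f n| ≤ n^{-k}`; and a limsup in `[0, ∞]` vanishes exactly when the terms are eventually below
each `e^{-k}`. -/

open Real

theorem ENNReal.limsup_eq_zero_iff_forall_eventually_le {α : Type*} {l : Filter α}
    {u : α → ENNReal} {ε : ℕ → ENNReal} (hε_pos : ∀ k, 0 < ε k)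
    (hε : Tendsto ε atTop (nhds 0)) :
    limsup u l = 0 ↔ ∀ k, ∀ᶠ a in l, u a ≤ ε k := by
  constructor
  · intro hu k
    have : limsup u l < ε k := hu ▸ hε_pos k
    exact (eventually_lt_of_limsup_lt this).mono fun _ => le_of_lt
  · intro hu
    have hle : ∀ k, limsup u l ≤ ε k := fun k => limsup_le_of_le (by isBoundedDefault) (hu k)
    exact le_antisymm (ge_of_tendsto' hε hle) zero_le

theorem tendsto_ofReal_exp_neg_natCast :
    Tendsto (fun k : ℕ => ENNReal.ofReal (exp (-k))) atTop (nhds 0) := by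
  simpa using ENNReal.tendsto_ofReal
    (tendsto_exp_atBot.comp (tendsto_neg_atTop_atBot.comp tendsto_natCast_atTop_atTop))

theorem exp_log_div_log_le_exp_neg_iff {x b : ℝ} (hx : 0 < x) (hb : 1 < b) (k : ℕ) :
    exp (log x / log b) ≤ exp (-k) ↔ x ≤ (b ^ k)⁻¹ := by
  rw [exp_le_exp, div_le_iff₀ (log_pos hb), ← log_le_log_iff hx (by positivity), log_inv,
    log_pow, neg_mul]

theorem ite_ofReal_exp_log_div_log_le_iff {x b : ℝ} (hb : 1 < b) (k : ℕ) :
    (if x = 0 then 0 else ENNReal.ofReal (exp (log |x| / log b))) ≤ ENNReal.ofReal (exp (-k)) ↔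
      |x| ≤ (b ^ k)⁻¹ := by
  split_ifs with hx
  · simp only [hx, abs_zero, zero_le, true_iff]
    positivity
  · rw [ENNReal.ofReal_le_ofReal_iff (exp_pos _).le,
      exp_log_div_log_le_exp_neg_iff (abs_pos.mpr hx) hb]

/-- A function is negligible if and only if its pseudometric distance to the zero
function vanishes. -/
theorem negligible_iff_pd_zero (f : ℕ → ℝ) :
    Negligible f ↔ pd f (fun _ => 0) = 0 := by
  simp only [pd, sub_zero]
  rw [ENNReal.limsup_eq_zero_iff_forall_eventually_le (fun k => by positivity)
    tendsto_ofReal_exp_neg_natCast]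
  refine forall_congr' fun k => ?_
  rw [← eventually_atTop]
  refine eventually_congr ((eventually_ge_atTop 2).mono fun n hn => ?_)
  exact (ite_ofReal_exp_log_div_log_le_iff (by exact_mod_cast hn) k).symm
end

section
/- Relative entropy under multiplicative perturbation: let 0 < δ ≤ 4/5 and let p* be a probability mass function on X satisfying (1−δ)·p(a) ≤ p*(a) ≤ (1+δ)·p(a) for all a ∈ X. Then D(p*‖q) ≥ D(p‖q) − δ·(D(p‖q) + 2·log|X| + 4). -/
open Finset

/-- Relative entropy under multiplicative perturbation: if `(1-δ) p ≤ p* ≤ (1+δ) p`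
pointwise for `0 < δ ≤ 4/5`, then
`D(p*‖q) ≥ D(p‖q) - δ (D(p‖q) + 2 log |X| + 4)`. -/
theorem relativeEntropy_multiplicative_perturbation
    {X : Type*} [Fintype X] [Nonempty X]
    (p q pstar : X → ℝ)
    (hp : ∀ x, 0 < p x) (hq : ∀ x, 0 < q x)
    (hps : ∑ x, p x = 1) (hqs : ∑ x, q x = 1)
    (hpstar0 : ∀ x, 0 ≤ pstar x) (hpstars : ∑ x, pstar x = 1)
    (δ : ℝ) (hδ0 : 0 < δ) (hδ1 : δ ≤ 4 / 5)
    (hlow : ∀ a, (1 - δ) * p a ≤ pstar a)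
    (hhigh : ∀ a, pstar a ≤ (1 + δ) * p a) :
    ∑ a, pstar a * Real.log (pstar a / q a)
      ≥ (∑ a, p a * Real.log (p a / q a))
        - δ * ((∑ a, p a * Real.log (p a / q a))
            + 2 * Real.log (Fintype.card X) + 4) := by
  have hcard : (1:ℝ) ≤ (Fintype.card X : ℝ) := by exact_mod_cast Fintype.card_pos
  have hlogX : 0 ≤ Real.log (Fintype.card X) := Real.log_nonneg hcard
  have hpst : ∀ x, 0 < pstar x := fun x =>
    lt_of_lt_of_le (by nlinarith [hp x]) (hlow x)
  set D := ∑ a, p a * Real.log (p a / q a) with hD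
  -- decomposition of the p* relative entropy
  have hdecomp : ∑ a, pstar a * Real.log (pstar a / q a)
      = (∑ a, pstar a * Real.log (pstar a / p a))
        + ∑ a, pstar a * Real.log (p a / q a) := by
    rw [← Finset.sum_add_distrib]
    refine Finset.sum_congr rfl fun a _ => ?_
    have ha := hpst a; have hb := hp a; have hc := hq a
    rw [← mul_add, ← Real.log_mul (by positivity) (by positivity)]
    congr 2
    field_simp
  -- first sum is nonnegative
  have h1 : 0 ≤ ∑ a, pstar a * Real.log (pstar a / p a) := by
    have key : ∀ a ∈ Finset.univ (α := X),
        pstar a - p a ≤ pstar a * Real.log (pstar a / p a) := by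
      intro a _
      have ha := hpst a; have hb := hp a
      have h := Real.log_le_sub_one_of_pos (show 0 < p a / pstar a by positivity)
      have hlog : Real.log (p a / pstar a) = - Real.log (pstar a / p a) := by
        rw [← Real.log_inv]; congr 1; field_simp
      rw [hlog] at h
      have hpa := hp a
      have hpsa := hpst a
      have h2 : 1 - p a / pstar a ≤ Real.log (pstar a / p a) := by linarith
      have h3 := mul_le_mul_of_nonneg_left h2 hpsa.le
      have h4 : pstar a * (1 - p a / pstar a) = pstar a - p a := by
        field_simp
      linarith [h4 ▸ h3]
    have := Finset.sum_le_sum key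
    rw [Finset.sum_sub_distrib, hps, hpstars] at this
    linarith
  -- pointwise bound  p|L| ≤ pL + 2q
  have habs : ∀ a, p a * |Real.log (p a / q a)|
      ≤ p a * Real.log (p a / q a) + 2 * q a := by
    intro a
    have hpa := hp a; have hqa := hq a
    have h := Real.log_le_sub_one_of_pos (show 0 < q a / p a by positivity)
    have hlog : Real.log (q a / p a) = - Real.log (p a / q a) := by
      rw [← Real.log_inv]; congr 1; field_simp
    rw [hlog] at h
    -- p * (-L) ≤ q - p
    have h2 : p a * (- Real.log (p a / q a)) ≤ q a - p a := by
      have := mul_le_mul_of_nonneg_left h hpa.le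
      have heq : p a * (q a / p a - 1) = q a - p a := by field_simp
      linarith [heq ▸ this]
    rcases abs_cases (Real.log (p a / q a)) with ⟨he, _⟩ | ⟨he, _⟩ <;>
      rw [he] <;> nlinarith
  have h3 : ∑ a, p a * |Real.log (p a / q a)| ≤ D + 2 := by
    have := Finset.sum_le_sum fun a (_ : a ∈ Finset.univ) => habs a
    rw [Finset.sum_add_distrib, ← Finset.mul_sum, hqs] at this
    linarith
  -- second sum bound
  have h2 : ∑ a, pstar a * Real.log (p a / q a)
      ≥ D - δ * ∑ a, p a * |Real.log (p a / q a)| := by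
    have key : ∀ a ∈ Finset.univ (α := X),
        p a * Real.log (p a / q a) - δ * (p a * |Real.log (p a / q a)|)
          ≤ pstar a * Real.log (p a / q a) := by
      intro a _
      have hpa := hp a
      have hub : |pstar a - p a| ≤ δ * p a := by
        rw [abs_le]; constructor <;> nlinarith [hlow a, hhigh a]
      have := neg_abs_le ((pstar a - p a) * Real.log (p a / q a))
      rw [abs_mul] at this
      have h5 : |pstar a - p a| * |Real.log (p a / q a)|
          ≤ δ * p a * |Real.log (p a / q a)| :=
        mul_le_mul_of_nonneg_right hub (abs_nonneg _)
      nlinarith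
    have := Finset.sum_le_sum key
    rw [Finset.sum_sub_distrib, ← Finset.mul_sum] at this
    rw [← hD] at this
    linarith
  have hfinal : D - δ * ∑ a, p a * |Real.log (p a / q a)|
      ≥ D - δ * (D + 2 * Real.log (Fintype.card X) + 4) := by
    have : δ * ∑ a, p a * |Real.log (p a / q a)|
        ≤ δ * (D + 2 * Real.log (Fintype.card X) + 4) := by
      apply mul_le_mul_of_nonneg_left _ hδ0.le
      linarith
    linarith
  rw [hdecomp]
  linarith
end

section
/- Type II error of the strong typicality test: let m ≥ 1 and 0 < δ ≤ 4/5, and let T be the set of tuples x ∈ X^m such that for every symbol a ∈ X the empirical frequency m_a/m (where m_a = #{i : x_i = a}) satisfies |m_a/m − p(a)| ≤ δ·p(a). Then Σ_{x ∈ T} Π_{i=1}^m q(x_i) ≤ (m+1)^{|X|} · exp(−m·(D(p‖q) − δ·(D(p‖q) + 2·log|X| + 4))). -/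
open Finset

/-- The absolute relative entropy sum is bounded by `D + 2 log |X| + 4`. -/
lemma abs_log_ratio_sum_le
    {X : Type*} [Fintype X] [Nonempty X]
    (p q : X → ℝ) (hp : ∀ a, 0 < p a) (hq : ∀ a, 0 < q a)
    (hps : ∑ a, p a = 1) (hqs : ∑ a, q a = 1) :
    ∑ a, p a * |Real.log (p a / q a)|
      ≤ (∑ a, p a * Real.log (p a / q a)) + 2 * Real.log (Fintype.card X) + 4 := by
  have hlog : (0:ℝ) ≤ Real.log (Fintype.card X) := by
    apply Real.log_nonneg
    have : 1 ≤ Fintype.card X := Fintype.card_pos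
    exact_mod_cast this
  have key : ∑ a, p a * |Real.log (p a / q a)|
      ≤ (∑ a, p a * Real.log (p a / q a)) + 2 * ∑ a, q a := by
    rw [Finset.mul_sum, ← Finset.sum_add_distrib]
    apply Finset.sum_le_sum
    intro a _
    have hpa := hp a; have hqa := hq a
    have h1 : p a * Real.log (q a / p a) ≤ q a - p a := by
      have := Real.log_le_sub_one_of_pos (div_pos hqa hpa)
      calc p a * Real.log (q a / p a) ≤ p a * (q a / p a - 1) := by
            exact mul_le_mul_of_nonneg_left this hpa.le
        _ = q a - p a := by field_simp
    have hlogneg : Real.log (q a / p a) = - Real.log (p a / q a) := by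
      rw [← Real.log_inv, inv_div]
    rcases abs_cases (Real.log (p a / q a)) with ⟨h, _⟩ | ⟨h, hneg⟩
    · rw [h]; nlinarith [hqa.le, hpa.le]
    · rw [h]
      have h2 : p a * Real.log (q a / p a) ≤ q a := by nlinarith [hpa.le]
      rw [hlogneg] at h2
      nlinarith
  have : (2:ℝ) * ∑ a, q a = 2 := by rw [hqs]; ring
  rw [this] at key
  linarith

/-- Type II error of the strong typicality test: the i.i.d. `q`-probability of the
strongly `δ`-typical set (with respect to `p`) is at most
`(m+1)^{|X|} exp (-m (D(p‖q) - δ (D(p‖q) + 2 log |X| + 4)))`. -/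
theorem strong_typicality_test_type_II
    {X : Type*} [Fintype X] [DecidableEq X] [Nonempty X]
    (p q : X → ℝ) (hp : ∀ a, 0 < p a) (hq : ∀ a, 0 < q a)
    (hps : ∑ a, p a = 1) (hqs : ∑ a, q a = 1)
    (m : ℕ) (hm : 1 ≤ m) (δ : ℝ) (hδ0 : 0 < δ) (hδ1 : δ ≤ 4 / 5) :
    ∑ x ∈ Finset.univ.filter (fun x : Fin m → X =>
        ∀ a : X,
          |((Finset.univ.filter (fun i : Fin m => x i = a)).card : ℝ) / (m : ℝ) - p a|
            ≤ δ * p a),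
      ∏ i, q (x i)
    ≤ ((m : ℝ) + 1) ^ (Fintype.card X) *
        Real.exp (-(m : ℝ) * ((∑ a, p a * Real.log (p a / q a))
          - δ * ((∑ a, p a * Real.log (p a / q a))
              + 2 * Real.log (Fintype.card X) + 4))) := by
  set D : ℝ := ∑ a, p a * Real.log (p a / q a) with hD
  set C : ℝ := D - δ * (D + 2 * Real.log (Fintype.card X) + 4) with hC
  have hm0 : (0:ℝ) < (m:ℝ) := by exact_mod_cast hm
  -- pointwise bound
  have pointwise : ∀ x ∈ Finset.univ.filter (fun x : Fin m → X =>
        ∀ a : X,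
          |((Finset.univ.filter (fun i : Fin m => x i = a)).card : ℝ) / (m : ℝ) - p a|
            ≤ δ * p a),
      ∏ i, q (x i) ≤ Real.exp (-(m:ℝ) * C) * ∏ i, p (x i) := by
    intro x hx
    rw [Finset.mem_filter] at hx
    have hx := hx.2
    set r : X → ℝ := fun a =>
      ((Finset.univ.filter (fun i : Fin m => x i = a)).card : ℝ) / (m : ℝ) with hr
    -- key: ∏ q(x i) = (∏ p(x i)) * exp (m * ∑ a, r a * log (q a / p a))
    have prodpos : (0:ℝ) < ∏ i, p (x i) := Finset.prod_pos (fun i _ => hp (x i))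
    have hsum : ∑ i, Real.log (q (x i) / p (x i))
        = (m:ℝ) * ∑ a, r a * Real.log (q a / p a) := by
      rw [← Finset.sum_fiberwise' Finset.univ x (fun a => Real.log (q a / p a))]
      rw [Finset.mul_sum]
      apply Finset.sum_congr rfl
      intro a _
      rw [Finset.sum_const, nsmul_eq_mul, hr]
      field_simp
    have hprod : ∏ i, q (x i)
        = (∏ i, p (x i)) * Real.exp (∑ i, Real.log (q (x i) / p (x i))) := by
      rw [Real.exp_sum]
      rw [← Finset.prod_mul_distrib]
      apply Finset.prod_congr rfl
      intro i _
      rw [Real.exp_log (div_pos (hq (x i)) (hp (x i)))]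
      rw [mul_div_cancel₀ _ (hp (x i)).ne']
    -- bound the exponent
    have hexp : ∑ a, r a * Real.log (q a / p a) ≤ -C := by
      have step : ∀ a : X, r a * Real.log (q a / p a)
          ≤ -(p a * Real.log (p a / q a)) + δ * (p a * |Real.log (p a / q a)|) := by
        intro a
        have habs : |r a - p a| ≤ δ * p a := hx a
        have hlogneg : Real.log (q a / p a) = - Real.log (p a / q a) := by
          rw [← Real.log_inv, inv_div]
        have : r a * Real.log (q a / p a)
            = p a * Real.log (q a / p a) + (r a - p a) * Real.log (q a / p a) := by ring
        rw [this, hlogneg]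
        have h2 : (r a - p a) * (- Real.log (p a / q a))
            ≤ |r a - p a| * |Real.log (p a / q a)| := by
          calc (r a - p a) * (- Real.log (p a / q a))
              ≤ |(r a - p a) * (- Real.log (p a / q a))| := le_abs_self _
            _ = |r a - p a| * |Real.log (p a / q a)| := by rw [abs_mul, abs_neg]
        have h3 : |r a - p a| * |Real.log (p a / q a)|
            ≤ δ * p a * |Real.log (p a / q a)| :=
          mul_le_mul_of_nonneg_right habs (abs_nonneg _)
        nlinarith
      calc ∑ a, r a * Real.log (q a / p a)
          ≤ ∑ a, (-(p a * Real.log (p a / q a)) + δ * (p a * |Real.log (p a / q a)|)) :=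
            Finset.sum_le_sum (fun a _ => step a)
        _ = -D + δ * ∑ a, p a * |Real.log (p a / q a)| := by
            rw [Finset.sum_add_distrib, Finset.sum_neg_distrib, ← Finset.mul_sum, hD]
        _ ≤ -D + δ * (D + 2 * Real.log (Fintype.card X) + 4) := by
            have := abs_log_ratio_sum_le p q hp hq hps hqs
            nlinarith
        _ = -C := by rw [hC]; ring
    rw [hprod, hsum, mul_comm]
    apply mul_le_mul_of_nonneg_right _ prodpos.le
    apply Real.exp_le_exp.mpr
    calc (m:ℝ) * ∑ a, r a * Real.log (q a / p a) ≤ (m:ℝ) * (-C) :=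
          mul_le_mul_of_nonneg_left hexp hm0.le
      _ = -(m:ℝ) * C := by ring
  -- sum over the typical set
  have hsum1 : ∑ x : Fin m → X, ∏ i, p (x i) = 1 := by
    rw [← Fintype.prod_sum (fun (_ : Fin m) (a : X) => p a)]
    simp [hps]
  calc ∑ x ∈ Finset.univ.filter (fun x : Fin m → X =>
        ∀ a : X,
          |((Finset.univ.filter (fun i : Fin m => x i = a)).card : ℝ) / (m : ℝ) - p a|
            ≤ δ * p a), ∏ i, q (x i)
      ≤ ∑ x ∈ Finset.univ.filter (fun x : Fin m → X =>
        ∀ a : X,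
          |((Finset.univ.filter (fun i : Fin m => x i = a)).card : ℝ) / (m : ℝ) - p a|
            ≤ δ * p a), Real.exp (-(m:ℝ) * C) * ∏ i, p (x i) :=
        Finset.sum_le_sum pointwise
    _ = Real.exp (-(m:ℝ) * C) * ∑ x ∈ Finset.univ.filter (fun x : Fin m → X =>
        ∀ a : X,
          |((Finset.univ.filter (fun i : Fin m => x i = a)).card : ℝ) / (m : ℝ) - p a|
            ≤ δ * p a), ∏ i, p (x i) := by rw [Finset.mul_sum]
    _ ≤ Real.exp (-(m:ℝ) * C) * ∑ x : Fin m → X, ∏ i, p (x i) := by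
        apply mul_le_mul_of_nonneg_left _ (Real.exp_pos _).le
        apply Finset.sum_le_sum_of_subset_of_nonneg (Finset.filter_subset _ _)
        intro x _ _
        exact (Finset.prod_pos (fun i _ => hp (x i))).le
    _ = Real.exp (-(m:ℝ) * C) := by rw [hsum1, mul_one]
    _ ≤ ((m : ℝ) + 1) ^ (Fintype.card X) * Real.exp (-(m:ℝ) * C) := by
        nth_rewrite 1 [← one_mul (Real.exp (-(m:ℝ) * C))]
        apply mul_le_mul_of_nonneg_right _ (Real.exp_pos _).le
        apply one_le_pow₀
        linarith
end

section
/- Binary relative-entropy converse bound: for all real numbers ε', ε, β with 0 < ε' ≤ ε ≤ 1/2 and 0 < β < 1, it holds that (1−ε')·log((1−ε')/β) + ε'·log(ε'/(1−β)) ≥ (1−ε)·(−log β) − h₂(ε), where h₂(ε) := −ε·log ε − (1−ε)·log(1−ε) is the binary entropy. -/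
/-- Binary relative-entropy converse bound: for `0 < ε' ≤ ε ≤ 1/2` and `0 < β < 1`,
`(1-ε') log((1-ε')/β) + ε' log(ε'/(1-β)) ≥ (1-ε)(-log β) - h₂(ε)`, where
`h₂(ε) = -ε log ε - (1-ε) log (1-ε)`. -/
theorem binary_relativeEntropy_converse
    (ε' ε β : ℝ) (hε'0 : 0 < ε') (hε'ε : ε' ≤ ε) (hε : ε ≤ 1 / 2)
    (hβ0 : 0 < β) (hβ1 : β < 1) :
    (1 - ε') * Real.log ((1 - ε') / β) + ε' * Real.log (ε' / (1 - β))
      ≥ (1 - ε) * (-Real.log β) - (-ε * Real.log ε - (1 - ε) * Real.log (1 - ε)) := by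
  have h1 : Real.log ((1 - ε') / β) = Real.log (1 - ε') - Real.log β :=
    Real.log_div (by linarith) (ne_of_gt hβ0)
  have h2 : Real.log (ε' / (1 - β)) = Real.log ε' - Real.log (1 - β) :=
    Real.log_div (ne_of_gt hε'0) (by linarith)
  have hlogβ : Real.log β < 0 := Real.log_neg hβ0 hβ1
  have hlog1β : Real.log (1 - β) < 0 := Real.log_neg (by linarith) (by linarith)
  have hmono : Real.binEntropy ε' ≤ Real.binEntropy ε := by
    rcases eq_or_lt_of_le hε'ε with h | h
    · rw [h]
    · exact (Real.binEntropy_strictMonoOn ⟨hε'0.le, by norm_num; linarith⟩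
        ⟨by linarith, by norm_num; linarith⟩ h).le
  have hb : ∀ x : ℝ, 0 < x → x < 1 →
      Real.binEntropy x = -x * Real.log x - (1 - x) * Real.log (1 - x) := by
    intro x hx0 hx1
    rw [Real.binEntropy, Real.log_inv, Real.log_inv]; ring
  rw [hb ε' hε'0 (by linarith), hb ε (by linarith) (by linarith)] at hmono
  rw [h1, h2]
  nlinarith [mul_nonpos_of_nonneg_of_nonpos (sub_nonneg.2 hε'ε) hlogβ.le, mul_nonpos_of_nonneg_of_nonpos hε'0.le hlog1β.le]
end

section
/- Binary Rényi converse bound: for all real numbers α, ε', ε, β with α > 1, 0 ≤ ε' ≤ ε < 1, and 0 < β < 1, it holds that (1/(α−1))·log((1−ε')^α·β^{1−α} + (ε')^α·(1−β)^{1−α}) ≥ −log β + (α/(α−1))·log(1−ε). -/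
/-- Binary Rényi converse bound: for `α > 1`, `0 ≤ ε' ≤ ε < 1` and `0 < β < 1`,
`(1/(α-1)) log((1-ε')^α β^(1-α) + ε'^α (1-β)^(1-α)) ≥ -log β + (α/(α-1)) log(1-ε)`. -/
theorem binary_renyi_converse
    (α ε' ε β : ℝ) (hα : 1 < α) (hε'0 : 0 ≤ ε') (hε'ε : ε' ≤ ε) (hε : ε < 1)
    (hβ0 : 0 < β) (hβ1 : β < 1) :
    (1 / (α - 1)) *
        Real.log ((1 - ε') ^ α * β ^ (1 - α) + ε' ^ α * (1 - β) ^ (1 - α))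
      ≥ -Real.log β + (α / (α - 1)) * Real.log (1 - ε) := by
  have hε1 : (0:ℝ) < 1 - ε := by linarith
  have hε'1 : (0:ℝ) < 1 - ε' := by linarith
  have hβ' : (0:ℝ) < 1 - β := by linarith
  have hαpos : (0:ℝ) < α - 1 := by linarith
  have hkey : (1 - ε) ^ α * β ^ (1 - α)
      ≤ (1 - ε') ^ α * β ^ (1 - α) + ε' ^ α * (1 - β) ^ (1 - α) := by
    have h1 : (1 - ε) ^ α ≤ (1 - ε') ^ α :=
      Real.rpow_le_rpow hε1.le (by linarith) (by linarith)
    have h2 : 0 ≤ ε' ^ α * (1 - β) ^ (1 - α) :=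
      mul_nonneg (Real.rpow_nonneg hε'0 α) (Real.rpow_nonneg hβ'.le _)
    have hb : 0 ≤ β ^ (1 - α) := Real.rpow_nonneg hβ0.le _
    nlinarith [mul_le_mul_of_nonneg_right h1 hb]
  have hpos : 0 < (1 - ε) ^ α * β ^ (1 - α) :=
    mul_pos (Real.rpow_pos_of_pos hε1 α) (Real.rpow_pos_of_pos hβ0 _)
  have hlog : Real.log ((1 - ε) ^ α * β ^ (1 - α))
      ≤ Real.log ((1 - ε') ^ α * β ^ (1 - α) + ε' ^ α * (1 - β) ^ (1 - α)) :=
    Real.log_le_log hpos hkey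
  have hexp : Real.log ((1 - ε) ^ α * β ^ (1 - α))
      = α * Real.log (1 - ε) + (1 - α) * Real.log β := by
    rw [Real.log_mul (by positivity) (by positivity), Real.log_rpow hε1,
      Real.log_rpow hβ0]
  have := mul_le_mul_of_nonneg_left hlog (le_of_lt (by positivity : (0:ℝ) < 1 / (α - 1)))
  rw [hexp] at this
  have hfield : (1 / (α - 1)) * (α * Real.log (1 - ε) + (1 - α) * Real.log β)
      = -Real.log β + (α / (α - 1)) * Real.log (1 - ε) := by
    field_simp
    ring
  linarith [this, hfield.ge, hfield.le]
end

section
/- Single-shot achievability via the likelihood ratio test: let 0 < α < 1 and 0 < ε < 1, set Q := Σ_{x ∈ X} p(x)^α·q(x)^{1−α}, let γ := (1 + (ε/Q)^{1/(1−α)})^{−1}, and let Λ := {x ∈ X : γ·p(x) > (1−γ)·q(x)}. Then the test Λ satisfies Σ_{x ∉ Λ} p(x) ≤ ε and Σ_{x ∈ Λ} q(x) ≤ Q^{1/(1−α)} · ε^{−α/(1−α)}; in particular −log(Σ_{x ∈ Λ} q(x)) ≥ D_α(p‖q) − (α/(1−α))·log(1/ε), where D_α(p‖q) := (1/(α−1))·log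 Q. -/
/-! With `t = (ε/Q)^(1/(1-α))` the test `Λ` is `{x : t q(x) < p(x)}`. On its complement
`p ≤ t q`, so `p = p^α p^(1-α) ≤ t^(1-α) p^α q^(1-α)`; on `Λ`, `q < p / t`, so
`q = q^α q^(1-α) ≤ t^(-α) p^α q^(1-α)`. Summing and bounding the partial sums of
`p^α q^(1-α)` by `Q` gives the two error bounds, and the choice of `t` turns them into
`ε` and `Q^(1/(1-α)) ε^(-α/(1-α))`. -/

open Finset Real

theorem le_rpow_mul_rpow_mul_rpow_of_le_mul {a b s α : ℝ} (ha : 0 ≤ a) (hb : 0 ≤ b)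
    (hs : 0 ≤ s) (hα : α ≤ 1) (h : a ≤ s * b) :
    a ≤ s ^ (1 - α) * (a ^ α * b ^ (1 - α)) :=
  calc a = a ^ α * a ^ (1 - α) := by rw [← rpow_add' ha (by norm_num), add_sub_cancel, rpow_one]
    _ ≤ a ^ α * (s * b) ^ (1 - α) := by gcongr
    _ = s ^ (1 - α) * (a ^ α * b ^ (1 - α)) := by rw [mul_rpow hs hb]; ring

section LikelihoodRatioTest

variable {X : Type*} [Fintype X] {p q : X → ℝ} {t α : ℝ}

noncomputable def likelihoodRatioTest (p q : X → ℝ) (t : ℝ) : Finset X :=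
  univ.filter fun x => t * q x < p x

theorem sum_compl_likelihoodRatioTest_le [DecidableEq X] (hp : ∀ x, 0 ≤ p x)
    (hq : ∀ x, 0 ≤ q x) (ht : 0 ≤ t) (hα : α ≤ 1) :
    ∑ x ∈ (likelihoodRatioTest p q t)ᶜ, p x ≤ t ^ (1 - α) * ∑ x, p x ^ α * q x ^ (1 - α) :=
  calc ∑ x ∈ (likelihoodRatioTest p q t)ᶜ, p x
      ≤ ∑ x ∈ (likelihoodRatioTest p q t)ᶜ, t ^ (1 - α) * (p x ^ α * q x ^ (1 - α)) := by
        refine sum_le_sum fun x hx => le_rpow_mul_rpow_mul_rpow_of_le_mul (hp x) (hq x) ht hα ?_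
        simpa [likelihoodRatioTest] using hx
    _ ≤ t ^ (1 - α) * ∑ x, p x ^ α * q x ^ (1 - α) := by
        rw [← mul_sum]
        refine mul_le_mul_of_nonneg_left (sum_le_univ_sum_of_nonneg fun x => ?_) (rpow_nonneg ht _)
        exact mul_nonneg (rpow_nonneg (hp x) _) (rpow_nonneg (hq x) _)

theorem sum_likelihoodRatioTest_le (hp : ∀ x, 0 ≤ p x) (hq : ∀ x, 0 ≤ q x) (ht : 0 < t)
    (hα : 0 ≤ α) :
    ∑ x ∈ likelihoodRatioTest p q t, q x ≤ t ^ (-α) * ∑ x, p x ^ α * q x ^ (1 - α) :=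
  calc ∑ x ∈ likelihoodRatioTest p q t, q x
      ≤ ∑ x ∈ likelihoodRatioTest p q t, t ^ (-α) * (p x ^ α * q x ^ (1 - α)) := by
        refine sum_le_sum fun x hx => ?_
        have hqp : q x ≤ t⁻¹ * p x := by
          rw [inv_mul_eq_div, le_div_iff₀' ht]
          exact (mem_filter.mp hx).2.le
        have := le_rpow_mul_rpow_mul_rpow_of_le_mul (hq x) (hp x) (inv_nonneg.mpr ht.le)
          (by linarith : 1 - α ≤ 1) hqp
        rwa [sub_sub_cancel, inv_rpow ht.le, ← rpow_neg ht.le, mul_comm (q x ^ _)] at this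
    _ ≤ t ^ (-α) * ∑ x, p x ^ α * q x ^ (1 - α) := by
        rw [← mul_sum]
        refine mul_le_mul_of_nonneg_left (sum_le_univ_sum_of_nonneg fun x => ?_) (by positivity)
        exact mul_nonneg (rpow_nonneg (hp x) _) (rpow_nonneg (hq x) _)

theorem filter_lt_eq_likelihoodRatioTest (ht : 0 ≤ t) :
    univ.filter (fun x => (1 - (1 + t)⁻¹) * q x < (1 + t)⁻¹ * p x) =
      likelihoodRatioTest p q t := by
  have h1t : 1 - (1 + t)⁻¹ = (1 + t)⁻¹ * t := by field_simp; ring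
  refine filter_congr fun x _ => ?_
  rw [h1t, mul_assoc, mul_lt_mul_iff_right₀ (by positivity)]

end LikelihoodRatioTest

theorem le_neg_log_of_le_rpow_mul_rpow {y Q ε α : ℝ} (hy : 0 < y) (hQ : 0 < Q) (hε : 0 < ε)
    (h : y ≤ Q ^ (1 / (1 - α)) * ε ^ (-(α / (1 - α)))) :
    1 / (α - 1) * log Q - α / (1 - α) * log (1 / ε) ≤ -log y := by
  have hlog := log_le_log hy h
  rw [log_mul (by positivity) (by positivity), log_rpow hQ, log_rpow hε] at hlog
  rw [one_div ε, log_inv, show α - 1 = -(1 - α) by ring, div_neg]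
  linarith

theorem div_rpow_one_div_one_sub_rpow_neg_mul {Q ε α : ℝ} (hQ : 0 < Q) (hε : 0 ≤ ε)
    (hα : 1 - α ≠ 0) :
    ((ε / Q) ^ (1 / (1 - α))) ^ (-α) * Q = Q ^ (1 / (1 - α)) * ε ^ (-(α / (1 - α))) :=
  calc ((ε / Q) ^ (1 / (1 - α))) ^ (-α) * Q = (ε / Q) ^ (-(α / (1 - α))) * Q ^ (1 : ℝ) := by
        rw [← rpow_mul (by positivity), rpow_one]; ring_nf
    _ = Q ^ (1 - -(α / (1 - α))) * ε ^ (-(α / (1 - α))) := by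
        rw [div_rpow hε hQ.le, rpow_sub hQ]; ring
    _ = Q ^ (1 / (1 - α)) * ε ^ (-(α / (1 - α))) := by
        congr 2; field_simp; ring

theorem single_shot_achievability_renyi_general
    {X : Type*} [Fintype X] [DecidableEq X]
    (p q : X → ℝ) (hp : ∀ x, 0 < p x) (hq : ∀ x, 0 < q x)
    (hps : ∑ x, p x = 1)
    (α ε : ℝ) (hα0 : 0 < α) (hα1 : α < 1) (hε0 : 0 < ε) (hε1 : ε < 1)
    (Q γ : ℝ) (hQ : Q = ∑ x, p x ^ α * q x ^ (1 - α))
    (hγ : γ = (1 + (ε / Q) ^ (1 / (1 - α)))⁻¹)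
    (Λ : Finset X) (hΛ : Λ = Finset.univ.filter (fun x => (1 - γ) * q x < γ * p x)) :
    (∑ x ∈ Λᶜ, p x ≤ ε) ∧
    (∑ x ∈ Λ, q x ≤ Q ^ (1 / (1 - α)) * ε ^ (-(α / (1 - α)))) ∧
    (-Real.log (∑ x ∈ Λ, q x)
      ≥ (1 / (α - 1)) * Real.log Q - (α / (1 - α)) * Real.log (1 / ε)) := by
  have hX : (univ : Finset X).Nonempty :=
    nonempty_of_sum_ne_zero (f := p) (by rw [hps]; exact one_ne_zero)
  have hQ0 : 0 < Q := hQ ▸ sum_pos (fun x _ => by have := hp x; have := hq x; positivity) hX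
  have h1α : 1 - α ≠ 0 := (sub_pos.mpr hα1).ne'
  set t := (ε / Q) ^ (1 / (1 - α)) with ht_def
  have ht : 0 < t := by positivity
  have hΛt : Λ = likelihoodRatioTest p q t := by
    rw [hΛ, hγ]; exact filter_lt_eq_likelihoodRatioTest ht.le
  have type1 : ∑ x ∈ Λᶜ, p x ≤ ε := by
    have := sum_compl_likelihoodRatioTest_le (fun x => (hp x).le) (fun x => (hq x).le) ht.le
      hα1.le
    rwa [← hQ, ← hΛt, ht_def, one_div, rpow_inv_rpow (by positivity) h1α,
      div_mul_cancel₀ _ hQ0.ne'] at this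
  have type2 : ∑ x ∈ Λ, q x ≤ Q ^ (1 / (1 - α)) * ε ^ (-(α / (1 - α))) := by
    have := sum_likelihoodRatioTest_le (fun x => (hp x).le) (fun x => (hq x).le) ht hα0.le
    rwa [← hQ, ← hΛt, ht_def, div_rpow_one_div_one_sub_rpow_neg_mul hQ0 hε0.le h1α] at this
  have hΛq : 0 < ∑ x ∈ Λ, q x := by
    -- `Λ` carries `p`-mass at least `1 - ε > 0`, so it is nonempty
    refine sum_pos (fun x _ => hq x) (nonempty_of_sum_ne_zero (f := p) (ne_of_gt ?_))
    linarith [sum_compl_add_sum Λ p]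
  exact ⟨type1, type2, le_neg_log_of_le_rpow_mul_rpow hΛq hQ0 hε0 type2⟩

/-- Single-shot achievability via the weighted likelihood ratio test: with
`Q = Σ_x p(x)^α q(x)^(1-α)`, `γ = (1 + (ε/Q)^(1/(1-α)))⁻¹` and
`Λ = {x : γ p(x) > (1-γ) q(x)}`, the test `Λ` has type I error at most `ε`, type II
error at most `Q^(1/(1-α)) ε^(-α/(1-α))`, and in particular
`-log (Σ_{x ∈ Λ} q(x)) ≥ D_α(p‖q) - (α/(1-α)) log (1/ε)`. -/
theorem single_shot_achievability_renyi
    {X : Type*} [Fintype X] [DecidableEq X] [Nonempty X]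
    (p q : X → ℝ) (hp : ∀ x, 0 < p x) (hq : ∀ x, 0 < q x)
    (hps : ∑ x, p x = 1) (hqs : ∑ x, q x = 1)
    (α ε : ℝ) (hα0 : 0 < α) (hα1 : α < 1) (hε0 : 0 < ε) (hε1 : ε < 1)
    (Q γ : ℝ) (hQ : Q = ∑ x, p x ^ α * q x ^ (1 - α))
    (hγ : γ = (1 + (ε / Q) ^ (1 / (1 - α)))⁻¹)
    (Λ : Finset X) (hΛ : Λ = Finset.univ.filter (fun x => (1 - γ) * q x < γ * p x)) :
    (∑ x ∈ Λᶜ, p x ≤ ε) ∧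
    (∑ x ∈ Λ, q x ≤ Q ^ (1 / (1 - α)) * ε ^ (-(α / (1 - α)))) ∧
    (-Real.log (∑ x ∈ Λ, q x)
      ≥ (1 / (α - 1)) * Real.log Q - (α / (1 - α)) * Real.log (1 / ε)) :=
  single_shot_achievability_renyi_general p q hp hq hps α ε hα0 hα1 hε0 hε1 Q γ hQ hγ Λ hΛ
end

section
/- Lipschitz bound for tensor-power expectation values: let d, k ≥ 1, let u, v ∈ ℂ^d be unit vectors (with respect to the standard Hermitian inner product), and let A be a complex matrix indexed by the function type (Fin k → Fin d) that is positive semidefinite with I − A positive semidefinite. Define the k-fold tensor powers U, V : (Fin k → Fin d) → ℂ by U(f) = Π_{i} u(f(i)) and V(f) = Π_{i} v(f(i)). Then |Σ_{f,g} conj(U(f))·A(f,g)·U(g) − Σ_{f,g} conj(V(f))·A(f,g)·V(g)| ≤ k·‖u − v‖₂. -/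
/-!
For unit vectors `x, y` and a Hermitian `A`, the difference `⟪x, A x⟫ - ⟪y, A y⟫` equals
`re ⟪x + y, A (x - y)⟫`, and `re ⟪x + y, x - y⟫ = 0`. Hence, up to sign, this number is the real
part of an off-diagonal entry both of the form of `A` and of the form of `1 - A`; when both are
positive, Cauchy–Schwarz for the two forms bounds it by `‖x + y‖ ‖x - y‖ / 2 ≤ ‖x - y‖`.
The tensor power `u ↦ u ⊗ ⋯ ⊗ u` is the restriction to the diagonal of a multilinear map whose
norm is multiplicative, so on the unit ball it is `k`-Lipschitz, by telescoping.
-/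

open RCLike
open scoped ComplexOrder

theorem four_mul_sq_le_add_mul_add {r a b c d : ℝ} (ha : 0 ≤ a) (hb : 0 ≤ b) (hc : 0 ≤ c)
    (hd : 0 ≤ d) (hac : r ^ 2 ≤ a * c) (hbd : r ^ 2 ≤ b * d) :
    4 * r ^ 2 ≤ (a + b) * (c + d) := by
  -- `a d + b c ≥ 2 √(a d b c) = 2 √(a c b d) ≥ 2 r ^ 2`
  nlinarith [sq_nonneg (a * d - b * c), mul_le_mul hac hbd (sq_nonneg r) (mul_nonneg ha hc),
    mul_nonneg ha hd, mul_nonneg hb hc]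

namespace LinearMap.IsPositive

variable {𝕜 E : Type*} [RCLike 𝕜] [NormedAddCommGroup E] [InnerProductSpace 𝕜 E]
  {T : E →ₗ[𝕜] E}

theorem norm_inner_map_sq_le (hT : T.IsPositive) (x y : E) :
    ‖inner 𝕜 x (T y)‖ ^ 2 ≤ re (inner 𝕜 x (T x)) * re (inner 𝕜 y (T y)) := by
  let core : PreInnerProductSpace.Core 𝕜 E :=
    { inner x y := inner 𝕜 x (T y)
      conj_inner_symm x y := by simp [hT.isSymmetric x y]
      re_inner_nonneg x := hT.re_inner_nonneg_right x
      add_left x y z := inner_add_left x y (T z)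
      smul_left x y r := inner_smul_left x (T y) r }
  have key := @InnerProductSpace.Core.inner_mul_inner_self_le 𝕜 E _ _ _ core x y
  change ‖inner 𝕜 x (T y)‖ * ‖inner 𝕜 y (T x)‖
    ≤ re (inner 𝕜 x (T x)) * re (inner 𝕜 y (T y)) at key
  rwa [← hT.isSymmetric y x, norm_inner_symm (T y) x, ← sq] at key

theorem abs_re_inner_map_le_of_re_inner_eq_zero (hT : T.IsPositive) (hT' : (1 - T).IsPositive)
    {w z : E} (hwz : re (inner 𝕜 w z) = 0) :
    |re (inner 𝕜 w (T z))| ≤ ‖w‖ * ‖z‖ / 2 := by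
  set r := re (inner 𝕜 w (T z))
  have sq_le_of_norm_le {S : E →ₗ[𝕜] E} (hS : S.IsPositive) {s : ℝ}
      (hs : |s| ≤ ‖inner 𝕜 w (S z)‖) :
      s ^ 2 ≤ re (inner 𝕜 w (S w)) * re (inner 𝕜 z (S z)) :=
    (sq_le_sq' (neg_le_of_abs_le hs) (le_of_abs_le hs)).trans (hS.norm_inner_map_sq_le w z)
  have hT_bound := sq_le_of_norm_le hT (abs_re_le_norm _)
  have hT'_bound : r ^ 2 ≤ re (inner 𝕜 w ((1 - T) w)) * re (inner 𝕜 z ((1 - T) z)) := by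
    have hr' : re (inner 𝕜 w ((1 - T) z)) = -r := by simp [r, inner_sub_right, hwz]
    rw [← neg_sq, ← hr']
    exact sq_le_of_norm_le hT' (abs_re_le_norm _)
  have hdiag (x : E) : re (inner 𝕜 x (T x)) + re (inner 𝕜 x ((1 - T) x)) = ‖x‖ ^ 2 := by
    simp [inner_sub_right]
  have h := four_mul_sq_le_add_mul_add (hT.re_inner_nonneg_right w)
    (hT'.re_inner_nonneg_right w) (hT.re_inner_nonneg_right z) (hT'.re_inner_nonneg_right z)
    hT_bound hT'_bound
  rw [hdiag, hdiag] at h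
  exact abs_le_of_sq_le_sq (by linarith) (by positivity)

theorem norm_inner_map_self_sub_inner_map_self_le (hT : T.IsPositive) (hT' : (1 - T).IsPositive)
    {x y : E} (hxy : ‖x‖ = ‖y‖) :
    ‖inner 𝕜 x (T x) - inner 𝕜 y (T y)‖ ≤ ‖x + y‖ * ‖x - y‖ / 2 := by
  have hre : re (inner 𝕜 (x + y) (x - y)) = 0 := by
    simp only [inner_add_left, inner_sub_right, map_add, map_sub, inner_self_eq_norm_sq, hxy,
      inner_re_symm (𝕜 := 𝕜) y x]
    ring
  have hdiff : inner 𝕜 x (T x) - inner 𝕜 y (T y) = (re (inner 𝕜 (x + y) (T (x - y))) : 𝕜) := by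
    have hsymm : re (inner 𝕜 y (T x)) = re (inner 𝕜 x (T y)) := by
      rw [← hT.isSymmetric y x, inner_re_symm]
    rw [← hT.isSymmetric.coe_re_inner_self_apply x, ← hT.isSymmetric.coe_re_inner_self_apply y,
      ← ofReal_sub, map_sub, inner_add_left, inner_sub_right, inner_sub_right]
    simp only [map_add, map_sub, hsymm]
    ring
  rw [hdiff, norm_ofReal]
  exact hT.abs_re_inner_map_le_of_re_inner_eq_zero hT' hre

theorem norm_inner_map_self_sub_inner_map_self_le_norm_sub (hT : T.IsPositive)
    (hT' : (1 - T).IsPositive) {x y : E} (hx : ‖x‖ = 1) (hy : ‖y‖ = 1) :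
    ‖inner 𝕜 x (T x) - inner 𝕜 y (T y)‖ ≤ ‖x - y‖ := by
  have hxy : ‖x + y‖ ≤ 2 := (norm_add_le x y).trans (by rw [hx, hy]; norm_num)
  calc ‖inner 𝕜 x (T x) - inner 𝕜 y (T y)‖ ≤ ‖x + y‖ * ‖x - y‖ / 2 :=
        hT.norm_inner_map_self_sub_inner_map_self_le hT' (hx.trans hy.symm)
    _ ≤ 2 * ‖x - y‖ / 2 := by gcongr
    _ = ‖x - y‖ := by ring

end LinearMap.IsPositive

namespace EuclideanSpace

variable {𝕜 ι κ : Type*} [RCLike 𝕜] [Fintype ι]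

noncomputable def tprod :
    MultilinearMap 𝕜 (fun _ : ι => EuclideanSpace 𝕜 κ) (EuclideanSpace 𝕜 (ι → κ)) :=
  (WithLp.linearEquiv 2 𝕜 ((ι → κ) → 𝕜)).symm.toLinearMap.compMultilinearMap <|
    MultilinearMap.pi fun f => (MultilinearMap.mkPiAlgebra 𝕜 ι 𝕜).compLinearMap fun i => projₗ (f i)

@[simp]
theorem tprod_apply (m : ι → EuclideanSpace 𝕜 κ) (f : ι → κ) : tprod m f = ∏ i, m i (f i) := rfl

theorem norm_tprod [DecidableEq ι] [Fintype κ] (m : ι → EuclideanSpace 𝕜 κ) :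
    ‖tprod m‖ = ∏ i, ‖m i‖ := by
  have hsq : ‖tprod m‖ ^ 2 = (∏ i, ‖m i‖) ^ 2 := by
    simp only [norm_sq_eq, tprod_apply, norm_prod, ← Finset.prod_pow, Finset.prod_univ_sum,
      Fintype.piFinset_univ]
  exact (sq_eq_sq₀ (norm_nonneg _) (by positivity)).1 hsq

theorem norm_tprod_const_sub_tprod_const_le [DecidableEq ι] [Fintype κ]
    {u v : EuclideanSpace 𝕜 κ} (hu : ‖u‖ ≤ 1) (hv : ‖v‖ ≤ 1) :
    ‖tprod (fun _ : ι => u) - tprod (fun _ => v)‖ ≤ Fintype.card ι * ‖u - v‖ := by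
  have hmax : max ‖fun _ : ι => u‖ ‖fun _ : ι => v‖ ≤ 1 :=
    max_le ((pi_norm_const_le u).trans hu) ((pi_norm_const_le v).trans hv)
  have hdiff : ‖(fun _ : ι => u) - fun _ => v‖ ≤ ‖u - v‖ := pi_norm_const_le (u - v)
  calc ‖tprod (fun _ : ι => u) - tprod (fun _ => v)‖
      ≤ 1 * Fintype.card ι * max ‖fun _ : ι => u‖ ‖fun _ : ι => v‖ ^ (Fintype.card ι - 1) *
          ‖(fun _ : ι => u) - fun _ => v‖ :=
        MultilinearMap.norm_image_sub_le_of_bound (tprod (𝕜 := 𝕜) (ι := ι) (κ := κ)) zero_le_one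
          (fun m => ((norm_tprod m).trans (one_mul _).symm).le) _ _
    _ ≤ 1 * Fintype.card ι * 1 * ‖u - v‖ := by
        gcongr
        exact pow_le_one₀ (by positivity) hmax
    _ = Fintype.card ι * ‖u - v‖ := by ring

end EuclideanSpace

theorem Matrix.sum_sum_star_mul_mul_eq_inner_toEuclideanLin {𝕜 n : Type*} [RCLike 𝕜] [Fintype n]
    [DecidableEq n] (A : Matrix n n 𝕜) (x : EuclideanSpace 𝕜 n) :
    ∑ i, ∑ j, star (x i) * A i j * x j = inner 𝕜 x (A.toEuclideanLin x) := by
  simp only [EuclideanSpace.inner_eq_star_dotProduct, Matrix.toLpLin_apply, dotProduct, mulVec,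
    Finset.sum_mul, Pi.star_apply]
  exact Finset.sum_congr rfl fun i _ => Finset.sum_congr rfl fun j _ => by ring

theorem tensor_power_expectation_lipschitz_general
    (d k : ℕ)
    (u v : EuclideanSpace ℂ (Fin d)) (hu : ‖u‖ = 1) (hv : ‖v‖ = 1)
    (A : Matrix (Fin k → Fin d) (Fin k → Fin d) ℂ)
    (hA : A.PosSemidef) (hA' : ((1 : Matrix (Fin k → Fin d) (Fin k → Fin d) ℂ) - A).PosSemidef) :
    ‖(∑ f : Fin k → Fin d, ∑ g : Fin k → Fin d,
          star (∏ i, u (f i)) * A f g * (∏ i, u (g i)))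
        - (∑ f : Fin k → Fin d, ∑ g : Fin k → Fin d,
          star (∏ i, v (f i)) * A f g * (∏ i, v (g i)))‖
      ≤ (k : ℝ) * ‖u - v‖ := by
  set U := EuclideanSpace.tprod (fun _ : Fin k => u)
  set V := EuclideanSpace.tprod (fun _ : Fin k => v)
  have hU : ‖U‖ = 1 := by simp [U, EuclideanSpace.norm_tprod, hu]
  have hV : ‖V‖ = 1 := by simp [V, EuclideanSpace.norm_tprod, hv]
  have hT : A.toEuclideanLin.IsPositive := Matrix.isPositive_toEuclideanLin_iff.mpr hA
  have hT' : (1 - A.toEuclideanLin).IsPositive := by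
    have h := Matrix.isPositive_toEuclideanLin_iff.mpr hA'
    rwa [map_sub, Matrix.toLpLin_one] at h
  calc _ = ‖inner ℂ U (A.toEuclideanLin U) - inner ℂ V (A.toEuclideanLin V)‖ := by
        rw [← A.sum_sum_star_mul_mul_eq_inner_toEuclideanLin U,
          ← A.sum_sum_star_mul_mul_eq_inner_toEuclideanLin V]
        rfl
    _ ≤ ‖U - V‖ := hT.norm_inner_map_self_sub_inner_map_self_le_norm_sub hT' hU hV
    _ ≤ Fintype.card (Fin k) * ‖u - v‖ :=
        EuclideanSpace.norm_tprod_const_sub_tprod_const_le hu.le hv.le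
    _ = k * ‖u - v‖ := by rw [Fintype.card_fin]

/-- Lipschitz bound for tensor-power expectation values: for unit vectors `u, v ∈ ℂ^d`
and a matrix `0 ⪯ A ⪯ I` on `(ℂ^d)^{⊗k}` (indexed by `Fin k → Fin d`), the expectation
values of `A` on the `k`-fold tensor powers of `u` and `v` differ by at most
`k ‖u - v‖₂`. -/
theorem tensor_power_expectation_lipschitz
    (d k : ℕ) (hd : 1 ≤ d) (hk : 1 ≤ k)
    (u v : EuclideanSpace ℂ (Fin d)) (hu : ‖u‖ = 1) (hv : ‖v‖ = 1)
    (A : Matrix (Fin k → Fin d) (Fin k → Fin d) ℂ)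
    (hA : A.PosSemidef) (hA' : ((1 : Matrix (Fin k → Fin d) (Fin k → Fin d) ℂ) - A).PosSemidef) :
    ‖(∑ f : Fin k → Fin d, ∑ g : Fin k → Fin d,
          star (∏ i, u (f i)) * A f g * (∏ i, u (g i)))
        - (∑ f : Fin k → Fin d, ∑ g : Fin k → Fin d,
          star (∏ i, v (f i)) * A f g * (∏ i, v (g i)))‖
      ≤ (k : ℝ) * ‖u - v‖ :=
  tensor_power_expectation_lipschitz_general d k u v hu hv A hA hA'
end
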